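/- arXiv:2110.00126 — 6 statements merged into one kernel-verified Lean document; each statement's English description precedes it below -/
import Mathlib

section
/- If a network is generically locally identifiable, i.e. K(G) = (Bᵀ T(G)ᵀ ⊗ C T(G)) I_{E} has full column rank for almost all G, then it is generically decoupled-identifiable, i.e. K̂(G,G') = (Bᵀ T(G')ᵀ ⊗ C T(G)) I_{E} has full column rank for almost all pairs (G,G'). -/
/-!
Replacing the inverses in `K̂(G,G')` by adjugates multiplies it by the nonzero scalar
`det(I-G) det(I-G')` and makes its entries polynomials in the free entries of `(G,G')`.
Local identifiability at one `G` gives a nonzero `d × d` minor of `K(G) = K̂(G,G)`, so that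
minor of the polynomial matrix, multiplied by `det(I-G) det(I-G')`, is a nonzero polynomial `q`;
wherever `q` does not vanish, the same minor of `K̂(G,G')` is nonzero.
-/

open Matrix Kronecker MvPolynomial

/-- The matrix supported on the positions `pos` whose nonzero entries are given by `δ`. -/
noncomputable def placeEntries (n m : ℕ) (pos : Fin m → Fin n × Fin n) (δ : Fin m → ℂ) :
    Matrix (Fin n) (Fin n) ℂ :=
  Matrix.of fun i j => ∑ e : Fin m, if pos e = (i, j) then δ e else 0

/-- The 0/1 selection matrix `I_E` for the vectorized support. -/
noncomputable def selMatrix (n m : ℕ) (pos : Fin m → Fin n × Fin n) :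
    Matrix (Fin n × Fin n) (Fin m) ℂ :=
  Matrix.of fun p e => if p = ((pos e).2, (pos e).1) then 1 else 0

namespace Matrix

variable {K : Type*} [Field K]

section Minors

variable {m n : Type*} [Fintype n] [DecidableEq n]

theorem exists_submatrix_det_ne_zero_of_rank_eq [Fintype m] (A : Matrix m n K)
    (h : A.rank = Fintype.card n) : ∃ r : n → m, (A.submatrix r id).det ≠ 0 := by
  obtain ⟨κ, a, ha, hspan, hli⟩ := exists_linearIndependent' K A.row
  have : Fintype κ := Fintype.ofInjective a ha
  have hcard : Fintype.card κ = Fintype.card n := by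
    rw [← h, rank_eq_finrank_span_row, ← hspan, finrank_span_eq_card hli]
  let e : n ≃ κ := Fintype.equivOfCardEq hcard.symm
  refine ⟨a ∘ e, ?_⟩
  have hrows : LinearIndependent K (A.submatrix (a ∘ e) id).row := hli.comp e e.injective
  exact ((isUnit_iff_isUnit_det _).mp (linearIndependent_rows_iff_isUnit.mp hrows)).ne_zero

theorem rank_eq_of_submatrix_det_ne_zero (A : Matrix m n K) (r : n → m)
    (h : (A.submatrix r id).det ≠ 0) : A.rank = Fintype.card n :=
  le_antisymm A.rank_le_card_width <|
    (rank_of_det_ne_zero h).symm.le.trans (A.rank_submatrix_le r id)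

end Minors

section KronAdjugate

variable {a b c e : Type*} [Fintype a] [DecidableEq a]

/-- `(Bᵀ (A'⁻¹)ᵀ ⊗ C A⁻¹) P` with adjugates in place of the inverses; for `A = I - G`,
`A' = I - G'`, `P = I_E` this is `K̂(G,G')` with its denominators cleared. -/
def kronAdjugate {R : Type*} [CommRing R] (B : Matrix a b R) (C : Matrix c a R)
    (P : Matrix (a × a) e R) (A A' : Matrix a a R) : Matrix (b × c) e R :=
  ((Bᵀ * A'.adjugateᵀ) ⊗ₖ (C * A.adjugate)) * P

theorem map_kronAdjugate {R S : Type*} [CommRing R] [CommRing S] (f : R →+* S)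
    (B : Matrix a b R) (C : Matrix c a R) (P : Matrix (a × a) e R) (A A' : Matrix a a R) :
    (kronAdjugate B C P A A').map f =
      kronAdjugate (B.map f) (C.map f) (P.map f) (A.map f) (A'.map f) := by
  have hadj (M : Matrix a a R) : M.adjugate.map f = (M.map f).adjugate := f.map_adjugate M
  have hkron : ((Bᵀ * A'.adjugateᵀ) ⊗ₖ (C * A.adjugate)).map f =
      (Bᵀ * A'.adjugateᵀ).map f ⊗ₖ (C * A.adjugate).map f := ext fun _ _ => map_mul f _ _
  rw [kronAdjugate, kronAdjugate, Matrix.map_mul, hkron, Matrix.map_mul, Matrix.map_mul,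
    transpose_map, transpose_map, hadj, hadj]

theorem kronAdjugate_eq_smul (B : Matrix a b K) (C : Matrix c a K) (P : Matrix (a × a) e K)
    {A A' : Matrix a a K} (hA : A.det ≠ 0) (hA' : A'.det ≠ 0) :
    kronAdjugate B C P A A' =
      (A'.det * A.det) • (((Bᵀ * A'⁻¹ᵀ) ⊗ₖ (C * A⁻¹)) * P) := by
  have hadj {M : Matrix a a K} (hM : M.det ≠ 0) : M.adjugate = M.det • M⁻¹ := by
    rw [inv_def, smul_smul, Ring.inverse_eq_inv', mul_inv_cancel₀ hM, one_smul]
  rw [kronAdjugate, hadj hA, hadj hA', transpose_smul, Matrix.mul_smul, Matrix.mul_smul,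
    smul_kronecker, kronecker_smul, Matrix.smul_mul, Matrix.smul_mul, smul_smul]

variable [Fintype e]

theorem rank_kronAdjugate (B : Matrix a b K) (C : Matrix c a K) (P : Matrix (a × a) e K)
    {A A' : Matrix a a K} (hA : A.det ≠ 0) (hA' : A'.det ≠ 0) :
    (kronAdjugate B C P A A').rank = (((Bᵀ * A'⁻¹ᵀ) ⊗ₖ (C * A⁻¹)) * P).rank := by
  rw [kronAdjugate_eq_smul B C P hA hA']
  exact rank_smul_of_mem_nonZeroDivisors _ (mem_nonZeroDivisors_of_ne_zero (mul_ne_zero hA' hA))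

/-- The inverse of a singular matrix is `0` in Mathlib, which kills the whole product. -/
theorem det_ne_zero_of_rank_kronecker_inv_ne_zero (B : Matrix a b K) (C : Matrix c a K)
    (P : Matrix (a × a) e K) {A A' : Matrix a a K}
    (h : (((Bᵀ * A'⁻¹ᵀ) ⊗ₖ (C * A⁻¹)) * P).rank ≠ 0) : A.det ≠ 0 := by
  contrapose! h
  rw [nonsing_inv_apply_not_isUnit A (by simp [h])]
  simp

end KronAdjugate

end Matrix

theorem MvPolynomial.exists_ne_zero_rank_map_eval_eq {K σ m n : Type*} [Field K] [Fintype m]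
    [Fintype n] [DecidableEq n] (M : Matrix m n (MvPolynomial σ K)) (g : MvPolynomial σ K)
    (y₀ : σ → K) (hg : eval y₀ g ≠ 0) (hM : (M.map (eval y₀)).rank = Fintype.card n) :
    ∃ q : MvPolynomial σ K, q ≠ 0 ∧
      ∀ y, eval y q ≠ 0 → eval y g ≠ 0 ∧ (M.map (eval y)).rank = Fintype.card n := by
  obtain ⟨r, hr⟩ := exists_submatrix_det_ne_zero_of_rank_eq _ hM
  have heval (y : σ → K) : eval y (g * (M.submatrix r id).det) =
      eval y g * ((M.map (eval y)).submatrix r id).det := by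
    rw [map_mul, RingHom.map_det]
    rfl
  refine ⟨g * (M.submatrix r id).det, fun h0 => ?_, fun y hy => ?_⟩
  · exact mul_ne_zero hg hr (by rw [← heval, h0, map_zero])
  · rw [heval] at hy
    exact ⟨left_ne_zero_of_mul hy,
      rank_eq_of_submatrix_det_ne_zero _ r (right_ne_zero_of_mul hy)⟩

noncomputable def genericNetwork {σ : Type*} (n d : ℕ) (G0 : Matrix (Fin n) (Fin n) ℂ)
    (pos : Fin d → Fin n × Fin n) (v : Fin d → σ) :
    Matrix (Fin n) (Fin n) (MvPolynomial σ ℂ) :=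
  G0.map C + Matrix.of fun i j => ∑ e, if pos e = (i, j) then X (v e) else 0

section GenericNetwork

variable {σ : Type*} {n d : ℕ} (G0 : Matrix (Fin n) (Fin n) ℂ) (pos : Fin d → Fin n × Fin n)
  (y : σ → ℂ)

theorem map_eval_one_sub_genericNetwork (v : Fin d → σ) :
    (1 - genericNetwork n d G0 pos v).map (eval y) =
      1 - (G0 + placeEntries n d pos (y ∘ v)) := by
  ext i j
  simp [genericNetwork, placeEntries, one_apply, apply_ite (eval y)]

theorem eval_det_one_sub_genericNetwork (v : Fin d → σ) :
    eval y (1 - genericNetwork n d G0 pos v).det =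
      (1 - (G0 + placeEntries n d pos (y ∘ v))).det := by
  rw [RingHom.map_det, RingHom.mapMatrix_apply, map_eval_one_sub_genericNetwork]

theorem map_eval_kronAdjugate_genericNetwork {b c e : Type*} (B : Matrix (Fin n) b ℂ)
    (C' : Matrix c (Fin n) ℂ) (P : Matrix (Fin n × Fin n) e ℂ) (u v : Fin d → σ) :
    (kronAdjugate (B.map MvPolynomial.C) (C'.map MvPolynomial.C) (P.map MvPolynomial.C)
      (1 - genericNetwork n d G0 pos u) (1 - genericNetwork n d G0 pos v)).map (eval y) =
      kronAdjugate B C' P (1 - (G0 + placeEntries n d pos (y ∘ u)))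
        (1 - (G0 + placeEntries n d pos (y ∘ v))) := by
  simp only [map_kronAdjugate, map_eval_one_sub_genericNetwork, Matrix.map_map]
  congr <;> ext <;> simp

end GenericNetwork

theorem stmt4_general (n nB nC d : ℕ)
    (B : Matrix (Fin n) (Fin nB) ℂ) (C : Matrix (Fin nC) (Fin n) ℂ)
    (G0 : Matrix (Fin n) (Fin n) ℂ)
    (pos : Fin d → Fin n × Fin n)
    (Gfun : (Fin d → ℂ) → Matrix (Fin n) (Fin n) ℂ)
    (hG : ∀ x, Gfun x = G0 + placeEntries n d pos x)
    (Kb : Matrix (Fin n) (Fin n) ℂ → Matrix (Fin n) (Fin n) ℂ →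
      Matrix (Fin nB × Fin nC) (Fin d) ℂ)
    (hKb : ∀ G G', Kb G G' =
      ((Bᵀ * ((1 - G')⁻¹)ᵀ) ⊗ₖ (C * (1 - G)⁻¹)) * selMatrix n d pos)
    (hloc : ∃ p : MvPolynomial (Fin d) ℂ, p ≠ 0 ∧
      ∀ x : Fin d → ℂ, eval x p ≠ 0 → (Kb (Gfun x) (Gfun x)).rank = d) :
    ∃ q : MvPolynomial (Fin d ⊕ Fin d) ℂ, q ≠ 0 ∧
      ∀ x x' : Fin d → ℂ, eval (Sum.elim x x') q ≠ 0 →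
        (Kb (Gfun x) (Gfun x')).rank = d := by
  simp only [hKb, hG] at hloc ⊢
  obtain ⟨p, hp, hrank⟩ := hloc
  rcases Nat.eq_zero_or_pos d with rfl | hd
  · exact ⟨1, one_ne_zero, fun x x' _ =>
      Nat.le_zero.mp ((rank_le_card_width _).trans_eq (Fintype.card_fin 0))⟩
  obtain ⟨x₀, hx₀⟩ : ∃ x₀, eval x₀ p ≠ 0 := by
    by_contra! h
    exact hp (MvPolynomial.funext fun x => by simpa using h x)
  have hK₀ := hrank x₀ hx₀
  have hdet₀ := det_ne_zero_of_rank_kronecker_inv_ne_zero _ _ _ (hK₀ ▸ hd.ne')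
  let A := 1 - genericNetwork n d G0 pos (Sum.inl : Fin d → Fin d ⊕ Fin d)
  let A' := 1 - genericNetwork n d G0 pos (Sum.inr : Fin d → Fin d ⊕ Fin d)
  obtain ⟨q, hq, hgeneric⟩ := exists_ne_zero_rank_map_eval_eq
    (kronAdjugate (B.map MvPolynomial.C) (C.map MvPolynomial.C)
      ((selMatrix n d pos).map MvPolynomial.C) A A') (A.det * A'.det) (Sum.elim x₀ x₀)
    (by simpa [A, A', eval_det_one_sub_genericNetwork] using mul_ne_zero hdet₀ hdet₀)
    (by simpa [A, A', map_eval_kronAdjugate_genericNetwork, rank_kronAdjugate _ _ _ hdet₀ hdet₀]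
      using hK₀)
  refine ⟨q, hq, fun x x' hx => ?_⟩
  obtain ⟨hdet, hrk⟩ := hgeneric _ hx
  simp only [A, A', map_mul, eval_det_one_sub_genericNetwork, Sum.elim_comp_inl,
    Sum.elim_comp_inr] at hdet
  rw [← rank_kronAdjugate _ _ _ (left_ne_zero_of_mul hdet) (right_ne_zero_of_mul hdet)]
  simpa [A, A', map_eval_kronAdjugate_genericNetwork] using hrk

/-- If the network is generically locally identifiable (`K(G)` full column rank for almost all
`G`), then it is generically decoupled-identifiable (`K̂(G,G')` full column rank for almost
all `(G,G')`). -/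
theorem stmt4 (n nB nC d : ℕ)
    (B : Matrix (Fin n) (Fin nB) ℂ) (C : Matrix (Fin nC) (Fin n) ℂ)
    (G0 : Matrix (Fin n) (Fin n) ℂ)
    (pos : Fin d → Fin n × Fin n) (hpos : Function.Injective pos)
    (Gfun : (Fin d → ℂ) → Matrix (Fin n) (Fin n) ℂ)
    (hG : ∀ x, Gfun x = G0 + placeEntries n d pos x)
    (hG0 : ∀ i j, (i, j) ∈ Set.range pos → G0 i j = 0)
    (Kb : Matrix (Fin n) (Fin n) ℂ → Matrix (Fin n) (Fin n) ℂ →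
      Matrix (Fin nB × Fin nC) (Fin d) ℂ)
    (hKb : ∀ G G', Kb G G' =
      ((Bᵀ * ((1 - G')⁻¹)ᵀ) ⊗ₖ (C * (1 - G)⁻¹)) * selMatrix n d pos)
    (hloc : ∃ p : MvPolynomial (Fin d) ℂ, p ≠ 0 ∧
      ∀ x : Fin d → ℂ, eval x p ≠ 0 → (Kb (Gfun x) (Gfun x)).rank = d) :
    ∃ q : MvPolynomial (Fin d ⊕ Fin d) ℂ, q ≠ 0 ∧
      ∀ x x' : Fin d → ℂ, eval (Sum.elim x x') q ≠ 0 →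
        (Kb (Gfun x) (Gfun x')).rank = d :=
  stmt4_general n nB nC d B C G0 pos Gfun hG Kb hKb hloc
end

section
/- The network G is generically decoupled-identifiable (the map Δ ↦ C T(G) Δ T(G') B is injective on matrices supported on E^Δ, for almost all (G,G')) if and only if its decoupled network Ĝ(G,G') is generically identifiable for almost all (G,G'), i.e. for almost all (G,G'), the map G^Δ ↦ Ĉ (I − Ĝ)^{-1} B̂ determines G^Δ uniquely among matrices with support E^Δ. -/
open Matrix MvPolynomial

/-- Determinant of `1 - Gfun x` as a polynomial in `x`. -/
noncomputable def pdet (n d : ℕ) (G0 : Matrix (Fin n) (Fin n) ℂ) (pos : Fin d → Fin n × Fin n) :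
    MvPolynomial (Fin d) ℂ :=
  Matrix.det (Matrix.of fun i j =>
    MvPolynomial.C ((1 - G0) i j) - ∑ e : Fin d, if pos e = (i, j) then X e else 0)

lemma eval_pdet (n d : ℕ) (G0 : Matrix (Fin n) (Fin n) ℂ) (pos : Fin d → Fin n × Fin n)
    (x : Fin d → ℂ) :
    eval x (pdet n d G0 pos) = (1 - (G0 + placeEntries n d pos x)).det := by
  rw [pdet, RingHom.map_det]
  congr 1
  ext i j
  simp [placeEntries, Matrix.sub_apply, Matrix.add_apply, apply_ite (eval x), sub_add_eq_sub_sub]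

lemma one_sub_fromBlocks {n : ℕ} (A A' D : Matrix (Fin n) (Fin n) ℂ) :
    (1 : Matrix (Fin n ⊕ Fin n) (Fin n ⊕ Fin n) ℂ) - fromBlocks A D 0 A'
      = fromBlocks (1 - A) (-D) 0 (1 - A') := by
  rw [← fromBlocks_one]
  ext (i | i) (j | j) <;> simp [fromBlocks]

lemma inv_block {n : ℕ} (A A' D : Matrix (Fin n) (Fin n) ℂ)
    (hA : IsUnit (1 - A).det) (hA' : IsUnit (1 - A').det) :
    (1 - fromBlocks A D 0 A')⁻¹
      = fromBlocks (1 - A)⁻¹ ((1 - A)⁻¹ * D * (1 - A')⁻¹) 0 (1 - A')⁻¹ := by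
  rw [one_sub_fromBlocks]
  apply Matrix.inv_eq_right_inv
  rw [fromBlocks_multiply]
  have h1 : (1 - A) * (1 - A)⁻¹ = 1 := Matrix.mul_nonsing_inv _ hA
  have h2 : (1 - A') * (1 - A')⁻¹ = 1 := Matrix.mul_nonsing_inv _ hA'
  have h3 : (1 - A) * ((1 - A)⁻¹ * D * (1 - A')⁻¹) + (-D) * (1 - A')⁻¹ = 0 := by
    rw [show (1 - A)⁻¹ * D * (1 - A')⁻¹ = (1 - A)⁻¹ * (D * (1 - A')⁻¹) by
      rw [Matrix.mul_assoc], ← Matrix.mul_assoc, h1]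
    simp
  rw [h1, h2, h3]
  simp [fromBlocks_one]

lemma closed_loop {n nB nC : ℕ} (B : Matrix (Fin n) (Fin nB) ℂ) (C : Matrix (Fin nC) (Fin n) ℂ)
    (A A' D : Matrix (Fin n) (Fin n) ℂ)
    (hA : IsUnit (1 - A).det) (hA' : IsUnit (1 - A').det) :
    (fromBlocks C 0 0 0 : Matrix (Fin nC ⊕ Fin nC) (Fin n ⊕ Fin n) ℂ)
        * (1 - fromBlocks A D 0 A')⁻¹
        * (fromBlocks 0 0 0 B : Matrix (Fin n ⊕ Fin n) (Fin nB ⊕ Fin nB) ℂ)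
      = fromBlocks 0 (C * (1 - A)⁻¹ * D * (1 - A')⁻¹ * B) 0 0 := by
  rw [inv_block A A' D hA hA', fromBlocks_multiply, fromBlocks_multiply]
  congr 1 <;> simp [Matrix.mul_assoc]

/-- A network is generically decoupled-identifiable (the map `Δ ↦ C T(G) Δ T(G') B` is injective
on matrices supported on `E^Δ`, for almost all `(G,G')`) iff its decoupled network
`Ĝ(G,G') = [[G, G^Δ],[0,G']]` with `B̂ = diag(0,B)`, `Ĉ = diag(C,0)` is generically
identifiable for almost all `(G,G')`. -/
theorem stmt6 (n nB nC d : ℕ)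
    (B : Matrix (Fin n) (Fin nB) ℂ) (C : Matrix (Fin nC) (Fin n) ℂ)
    (G0 : Matrix (Fin n) (Fin n) ℂ)
    (pos : Fin d → Fin n × Fin n) (hpos : Function.Injective pos)
    (Gfun : (Fin d → ℂ) → Matrix (Fin n) (Fin n) ℂ)
    (hG : ∀ x, Gfun x = G0 + placeEntries n d pos x)
    (Bhat : Matrix (Fin n ⊕ Fin n) (Fin nB ⊕ Fin nB) ℂ)
    (hBhat : Bhat = fromBlocks 0 0 0 B)
    (Chat : Matrix (Fin nC ⊕ Fin nC) (Fin n ⊕ Fin n) ℂ)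
    (hChat : Chat = fromBlocks C 0 0 0) :
    (∃ q : MvPolynomial (Fin d ⊕ Fin d) ℂ, q ≠ 0 ∧
        ∀ x x' : Fin d → ℂ, eval (Sum.elim x x') q ≠ 0 →
          ∀ Δ : Matrix (Fin n) (Fin n) ℂ,
            (∀ i j, (i, j) ∉ Set.range pos → Δ i j = 0) →
            C * (1 - Gfun x)⁻¹ * Δ * (1 - Gfun x')⁻¹ * B = 0 → Δ = 0) ↔
      (∃ q : MvPolynomial (Fin d ⊕ Fin d) ℂ, q ≠ 0 ∧
        ∀ x x' : Fin d → ℂ, eval (Sum.elim x x') q ≠ 0 →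
          ∀ GΔ GΔ' : Matrix (Fin n) (Fin n) ℂ,
            (∀ i j, (i, j) ∉ Set.range pos → GΔ i j = 0) →
            (∀ i j, (i, j) ∉ Set.range pos → GΔ' i j = 0) →
            Chat * (1 - fromBlocks (Gfun x) GΔ' 0 (Gfun x'))⁻¹ * Bhat =
              Chat * (1 - fromBlocks (Gfun x) GΔ 0 (Gfun x'))⁻¹ * Bhat →
            GΔ' = GΔ) := by
  subst hBhat hChat
  -- degenerate case d = 0
  rcases Nat.eq_zero_or_pos d with hd | hd
  · subst hd
    have hsupp : ∀ Δ : Matrix (Fin n) (Fin n) ℂ,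
        (∀ i j, (i, j) ∉ Set.range pos → Δ i j = 0) → Δ = 0 := by
      intro Δ h
      ext i j
      exact h i j (by rintro ⟨e, -⟩; exact e.elim0)
    constructor <;> intro _ <;> refine ⟨1, one_ne_zero, ?_⟩
    · intro x x' _ GΔ GΔ' h1 h2 _; rw [hsupp _ h1, hsupp _ h2]
    · intro x x' _ Δ hΔ _; exact hsupp Δ hΔ
  -- nonzero supported matrix
  set e0 : Fin d := ⟨0, hd⟩ with he0
  set Δ0 : Matrix (Fin n) (Fin n) ℂ := placeEntries n d pos (fun _ => 1) with hΔ0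
  have hΔ0supp : ∀ i j, (i, j) ∉ Set.range pos → Δ0 i j = 0 := by
    intro i j hij
    simp only [hΔ0, placeEntries, Matrix.of_apply]
    apply Finset.sum_eq_zero
    intro e _
    rw [if_neg]
    exact fun h => hij ⟨e, h⟩
  have hΔ0one : Δ0 (pos e0).1 (pos e0).2 = 1 := by
    simp only [hΔ0, placeEntries, Matrix.of_apply]
    rw [Finset.sum_eq_single e0]
    · simp
    · intro e _ hne
      rw [if_neg]
      intro h'
      rw [Prod.mk.eta] at h'
      exact hne (hpos h')
    · intro h'; exact absurd (Finset.mem_univ e0) h'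
  have hΔ0ne : Δ0 ≠ 0 := by
    intro h
    rw [h] at hΔ0one
    simp at hΔ0one
  set p : MvPolynomial (Fin d) ℂ := pdet n d G0 pos with hp
  have hevalp : ∀ x : Fin d → ℂ, eval x p = (1 - Gfun x).det := by
    intro x; rw [hG x]; exact eval_pdet n d G0 pos x
  rcases eq_or_ne p 0 with hp0 | hp0
  · -- all determinants vanish: both sides are false
    have hdet0 : ∀ x : Fin d → ℂ, (1 - Gfun x).det = 0 := by
      intro x; rw [← hevalp, hp0]; simp
    have hinv0 : ∀ x : Fin d → ℂ, (1 - Gfun x)⁻¹ = 0 := fun x =>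
      Matrix.nonsing_inv_apply_not_isUnit _ (by rw [hdet0]; exact not_isUnit_zero)
    have hbig0 : ∀ (x x' : Fin d → ℂ) (D : Matrix (Fin n) (Fin n) ℂ),
        (1 - fromBlocks (Gfun x) D 0 (Gfun x'))⁻¹ = 0 := by
      intro x x' D
      apply Matrix.nonsing_inv_apply_not_isUnit
      rw [one_sub_fromBlocks, det_fromBlocks_zero₂₁, hdet0]
      simp [not_isUnit_zero]
    constructor <;> rintro ⟨q, hq, hmain⟩ <;> exfalso
    · obtain ⟨v, hv⟩ : ∃ v : Fin d ⊕ Fin d → ℂ, eval v q ≠ 0 := by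
        by_contra h
        push_neg at h
        exact hq (MvPolynomial.funext (q := 0) (fun x => by simp [h x]))
      have hveq : Sum.elim (v ∘ Sum.inl) (v ∘ Sum.inr) = v := by
        funext s; cases s <;> rfl
      have := hmain (v ∘ Sum.inl) (v ∘ Sum.inr) (by rw [hveq]; exact hv) Δ0 hΔ0supp
        (by rw [hinv0]; simp)
      exact hΔ0ne this
    · obtain ⟨v, hv⟩ : ∃ v : Fin d ⊕ Fin d → ℂ, eval v q ≠ 0 := by
        by_contra h
        push_neg at h
        exact hq (MvPolynomial.funext (q := 0) (fun x => by simp [h x]))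
      have hveq : Sum.elim (v ∘ Sum.inl) (v ∘ Sum.inr) = v := by
        funext s; cases s <;> rfl
      have := hmain (v ∘ Sum.inl) (v ∘ Sum.inr) (by rw [hveq]; exact hv) 0 Δ0
        (by intro i j _; simp) hΔ0supp (by rw [hbig0, hbig0])
      exact hΔ0ne this
  · -- main case
    have hpl : (rename Sum.inl p : MvPolynomial (Fin d ⊕ Fin d) ℂ) ≠ 0 := fun h =>
      hp0 (rename_injective Sum.inl Sum.inl_injective (by simpa using h))
    have hpr : (rename Sum.inr p : MvPolynomial (Fin d ⊕ Fin d) ℂ) ≠ 0 := fun h =>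
      hp0 (rename_injective Sum.inr Sum.inr_injective (by simpa using h))
    constructor <;> rintro ⟨q, hq, hmain⟩ <;>
      refine ⟨q * rename Sum.inl p * rename Sum.inr p,
        mul_ne_zero (mul_ne_zero hq hpl) hpr, ?_⟩ <;>
      intro x x' hx
    · intro GΔ GΔ' hGΔ hGΔ' heq
      simp only [_root_.map_mul, mul_ne_zero_iff, eval_rename] at hx
      have hxl : Sum.elim x x' ∘ Sum.inl = x := by funext s; rfl
      have hxr : Sum.elim x x' ∘ Sum.inr = x' := by funext s; rfl
      rw [hxl] at hx
      rw [hxr] at hx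
      have hA : IsUnit (1 - Gfun x).det := by
        rw [← hevalp]; exact isUnit_iff_ne_zero.2 hx.1.2
      have hA' : IsUnit (1 - Gfun x').det := by
        rw [← hevalp]; exact isUnit_iff_ne_zero.2 hx.2
      rw [closed_loop B C _ _ _ hA hA', closed_loop B C _ _ _ hA hA'] at heq
      have heq2 : C * (1 - Gfun x)⁻¹ * GΔ' * (1 - Gfun x')⁻¹ * B
          = C * (1 - Gfun x)⁻¹ * GΔ * (1 - Gfun x')⁻¹ * B := by
        have := (fromBlocks_inj.1 heq).2.1
        exact this
      have hsub : C * (1 - Gfun x)⁻¹ * (GΔ' - GΔ) * (1 - Gfun x')⁻¹ * B = 0 := by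
        rw [Matrix.mul_sub, Matrix.sub_mul, Matrix.sub_mul, heq2, sub_self]
      have := hmain x x' hx.1.1 (GΔ' - GΔ)
        (fun i j hij => by rw [Matrix.sub_apply, hGΔ i j hij, hGΔ' i j hij, sub_self]) hsub
      exact sub_eq_zero.1 this
    · intro Δ hΔ hCB
      simp only [_root_.map_mul, mul_ne_zero_iff, eval_rename] at hx
      have hxl : Sum.elim x x' ∘ Sum.inl = x := by funext s; rfl
      have hxr : Sum.elim x x' ∘ Sum.inr = x' := by funext s; rfl
      rw [hxl] at hx
      rw [hxr] at hx
      have hA : IsUnit (1 - Gfun x).det := by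
        rw [← hevalp]; exact isUnit_iff_ne_zero.2 hx.1.2
      have hA' : IsUnit (1 - Gfun x').det := by
        rw [← hevalp]; exact isUnit_iff_ne_zero.2 hx.2
      have := hmain x x' hx.1.1 0 Δ (by intro i j _; simp) hΔ ?_
      · exact this
      · rw [closed_loop B C _ _ _ hA hA', closed_loop B C _ _ _ hA hA', hCB]
        simp
end

section
/- Let σ be a permutation of the product set 𝓑 × 𝓒 arising as a bijection E^Δ → 𝓑 × 𝓒 with components (σ_B, σ_C) relative to a reference bijection. Then sgn(σ) = (Π_c sgn(σ_{B,c})) · (Π_b sgn(σ_{C,b})), where σ_{C,b} is the restriction of σ_C to the set σ_B^{-1}(b) (which is a bijection onto 𝓒 when σ is bijective and |σ_B^{-1}(b)| = n_C), and σ_{B,c} is defined analogously. -/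
/-- Signature factorization for a permutation of a product set decomposed into row moves and
column moves: if `σ(b,c) = (g_c(b), h_{g_c(b)}(c))` (a column-moves stage `(b,c) ↦ (g_c b, c)`
followed by a row-moves stage `(b,c) ↦ (b, h_b c)`), then
`sgn(σ) = (Π_c sgn(σ_{B,c})) · (Π_b sgn(σ_{C,b}))`, where `σ_{B,c} = g c` is the induced
fiber permutation of 𝓑 for measurement `c` and `σ_{C,b} = h b` is the induced fiber
permutation of 𝓒 for excitation `b`. -/
theorem stmt9 (nB nC : ℕ)
    (h : Fin nB → Equiv.Perm (Fin nC)) (g : Fin nC → Equiv.Perm (Fin nB))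
    (σ : Equiv.Perm (Fin nB × Fin nC))
    (hσ : ∀ p : Fin nB × Fin nC, σ p = (g p.2 p.1, h (g p.2 p.1) p.2)) :
    Equiv.Perm.sign σ =
      (∏ c : Fin nC, Equiv.Perm.sign (g c)) * ∏ b : Fin nB, Equiv.Perm.sign (h b) := by
  have hs : σ = Equiv.prodCongrRight h * Equiv.prodCongrLeft g := by
    ext p
    · simp [hσ p, Equiv.prodCongrRight, Equiv.prodCongrLeft, Equiv.prodCongrLeft]
    · simp [hσ p, Equiv.prodCongrRight, Equiv.prodCongrLeft, Equiv.prodCongrLeft]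
  rw [hs, map_mul, Equiv.Perm.sign_prodCongrRight, Equiv.Perm.sign_prodCongrLeft, mul_comm]
end

section
/- With the setup of the Leibniz expansion, grouping terms by the excitation assignment yields det K̂ = Σ_{σ_B} sgn(σ_B) · (Π_{α ∈ E^Δ} T'_{s(α), σ_B(α)}) · Π_{b ∈ 𝓑} det T_{𝓒, t(σ_B^{-1}(b))}, where the sum runs over all maps σ_B : E^Δ → 𝓑 whose fibers each have exactly n_C elements, T_{𝓒, t(σ_B^{-1}(b))} is the n_C × n_C submatrix of T with rows indexed by 𝓒 and columns by the target nodes of the edges in σ_B^{-1}(b), and sgn(σ_B) is the sign defined via the fiber decomposition. -/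
open Matrix

open scoped Classical

/-- Grouped Leibniz expansion of `det K̂` by excitation assignments: summing over all maps
`σ_B = m : E^Δ → 𝓑` whose fibers have exactly `n_C` elements (each fiber enumerated by
`e m b : 𝓒 → E^Δ`), one has
`det K̂ = Σ_{σ_B} sgn(σ_B) (Π_α T'_{s(α),σ_B(α)}) Π_b det T_{𝓒, t(σ_B⁻¹(b))}`,
where `sgn(σ_B)` is the sign of the bijection `(b,c) ↦ e m b c` determined by the fiber
decomposition. -/
theorem stmt11 (n nB nC : ℕ) (T T' : Matrix (Fin n) (Fin n) ℂ)
    (s tg : Fin nB × Fin nC → Fin n) (exc : Fin nB → Fin n) (meas : Fin nC → Fin n)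
    (Khat : Matrix (Fin nB × Fin nC) (Fin nB × Fin nC) ℂ)
    (hK : ∀ p α, Khat p α = T' (s α) (exc p.1) * T (meas p.2) (tg α))
    (P : ((Fin nB × Fin nC) → Fin nB) → Prop)
    (hP : ∀ m, P m ↔ ∀ b, (Finset.univ.filter fun α => m α = b).card = nC)
    (e : ((Fin nB × Fin nC) → Fin nB) → Fin nB → Fin nC → Fin nB × Fin nC)
    (hfib : ∀ m, P m → ∀ b c, m (e m b c) = b)
    (hbij : ∀ m (_ : P m), Function.Bijective fun p : Fin nB × Fin nC => e m p.1 p.2) :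
    Khat.det = ∑ m ∈ (Finset.univ.filter fun m => P m).attach,
      ((Equiv.Perm.sign
          (Equiv.ofBijective (fun p : Fin nB × Fin nC => e m.1 p.1 p.2)
            (hbij m.1 (Finset.mem_filter.mp m.2).2)) : ℤ) : ℂ) *
        (∏ α : Fin nB × Fin nC, T' (s α) (exc (m.1 α))) *
        ∏ b : Fin nB,
          (Matrix.of fun c c' : Fin nC => T (meas c) (tg (e m.1 b c'))).det := by
  classical
  -- the fiber of `Prod.fst` over any `b` has `nC` elements
  have cardC : ∀ b : Fin nB,
      (Finset.univ.filter fun β : Fin nB × Fin nC => β.1 = b).card = nC := by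
    intro b
    have h1 : (Finset.univ.filter fun β : Fin nB × Fin nC => β.1 = b)
        = {b} ×ˢ (Finset.univ : Finset (Fin nC)) := by
      ext β
      simp only [Finset.mem_filter, Finset.mem_univ, true_and, Finset.mem_product,
        Finset.mem_singleton]
      exact ⟨fun h => ⟨h, trivial⟩, fun h => h.1⟩
    rw [h1, Finset.card_product, Finset.card_singleton, Finset.card_univ,
      Fintype.card_fin, one_mul]
  -- for any permutation σ, the map α ↦ (σ α).1 satisfies P
  have hPm : ∀ σ : Equiv.Perm (Fin nB × Fin nC), P fun α => (σ α).1 := by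
    intro σ
    rw [hP]
    intro b
    refine Eq.trans ?_ (cardC b)
    exact Finset.card_bij (fun α _ => σ α)
      (by
        intro a ha
        simp only [Finset.mem_filter, Finset.mem_univ, true_and] at ha ⊢
        exact ha)
      (fun a₁ _ a₂ _ h => σ.injective h)
      (by
        intro β hβ
        simp only [Finset.mem_filter, Finset.mem_univ, true_and] at hβ ⊢
        exact ⟨σ.symm β, by simp [hβ], by simp⟩)
  have hmem : ∀ σ : Equiv.Perm (Fin nB × Fin nC),
      (fun α => (σ α).1) ∈ Finset.univ.filter fun m => P m := fun σ =>
    Finset.mem_filter.mpr ⟨Finset.mem_univ _, hPm σ⟩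
  have hfst : ∀ (σ : Equiv.Perm (Fin nB × Fin nC)) (b : Fin nB) (c : Fin nC),
      (σ (e (fun α => (σ α).1) b c)).1 = b := fun σ b c => hfib _ (hPm σ) b c
  have hbij2 : ∀ (σ : Equiv.Perm (Fin nB × Fin nC)) (b : Fin nB),
      Function.Bijective fun c => (σ (e (fun α => (σ α).1) b c)).2 := by
    intro σ b
    rw [Fintype.bijective_iff_injective_and_card]
    refine ⟨fun c c' h => ?_, rfl⟩
    have h2 : σ (e (fun α => (σ α).1) b c) = σ (e (fun α => (σ α).1) b c') :=
      Prod.ext (by rw [hfst, hfst]) h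
    have h3 := σ.injective h2
    have h4 := (hbij _ (hPm σ)).injective (a₁ := (b, c)) (a₂ := (b, c')) h3
    exact congrArg Prod.snd h4
  -- symm of the ofBijective equiv
  have symm_ofBij : ∀ (m : (Fin nB × Fin nC) → Fin nB)
      (hpf : Function.Bijective fun p : Fin nB × Fin nC => e m p.1 p.2)
      (p : Fin nB × Fin nC),
      (Equiv.ofBijective _ hpf).symm (e m p.1 p.2) = p := by
    intro m hpf p
    rw [Equiv.symm_apply_eq]
    rfl
  -- expand each inner determinant and interchange product and sum
  have hdet : ∀ m : (Fin nB × Fin nC) → Fin nB,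
      (∏ b : Fin nB, (Matrix.of fun c c' : Fin nC => T (meas c) (tg (e m b c'))).det)
        = ∑ τ : Fin nB → Equiv.Perm (Fin nC), ∏ b : Fin nB,
            (((Equiv.Perm.sign (τ b) : ℤ) : ℂ) *
              ∏ c : Fin nC, T (meas (τ b c)) (tg (e m b c))) := by
    intro m
    rw [← Fintype.prod_sum (fun (b : Fin nB) (ρ : Equiv.Perm (Fin nC)) =>
      ((Equiv.Perm.sign ρ : ℤ) : ℂ) * ∏ c : Fin nC, T (meas (ρ c)) (tg (e m b c)))]
    refine Finset.prod_congr rfl fun b _ => ?_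
    rw [Matrix.det_apply']
    rfl
  rw [Matrix.det_apply']
  have hRHS : (∑ m ∈ (Finset.univ.filter fun m => P m).attach,
      ((Equiv.Perm.sign
          (Equiv.ofBijective (fun p : Fin nB × Fin nC => e m.1 p.1 p.2)
            (hbij m.1 (Finset.mem_filter.mp m.2).2)) : ℤ) : ℂ) *
        (∏ α : Fin nB × Fin nC, T' (s α) (exc (m.1 α))) *
        ∏ b : Fin nB,
          (Matrix.of fun c c' : Fin nC => T (meas c) (tg (e m.1 b c'))).det)
      = ∑ x ∈ ((Finset.univ.filter fun m => P m).attach ×ˢ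
          (Finset.univ : Finset (Fin nB → Equiv.Perm (Fin nC)))),
          ((Equiv.Perm.sign
              (Equiv.ofBijective (fun p : Fin nB × Fin nC => e x.1.1 p.1 p.2)
                (hbij x.1.1 (Finset.mem_filter.mp x.1.2).2)) : ℤ) : ℂ) *
            (∏ α : Fin nB × Fin nC, T' (s α) (exc (x.1.1 α))) *
            ∏ b : Fin nB, (((Equiv.Perm.sign (x.2 b) : ℤ) : ℂ) *
              ∏ c : Fin nC, T (meas (x.2 b c)) (tg (e x.1.1 b c))) := by
    rw [Finset.sum_product]
    refine Finset.sum_congr rfl fun m _ => ?_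
    rw [hdet m.1, Finset.mul_sum]
  rw [hRHS]
  refine Finset.sum_bij'
    (i := fun σ _ => (⟨fun α => (σ α).1, hmem σ⟩,
      fun b => Equiv.ofBijective _ (hbij2 σ b)))
    (j := fun x _ => (Equiv.ofBijective (fun p : Fin nB × Fin nC => e x.1.1 p.1 p.2)
      (hbij x.1.1 (Finset.mem_filter.mp x.1.2).2)).symm.trans (Equiv.prodCongrRight x.2))
    (fun σ _ => by simp [Finset.mem_product]) (fun x _ => Finset.mem_univ _)
    ?_ ?_ ?_
  · -- left inverse : j (i σ) = σ
    intro σ _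
    apply Equiv.ext
    intro α
    obtain ⟨p, rfl⟩ := (hbij _ (hPm σ)).surjective α
    rw [Equiv.trans_apply, symm_ofBij _ _ p]
    show (p.1, (σ (e (fun α => (σ α).1) p.1 p.2)).2) = σ (e (fun α => (σ α).1) p.1 p.2)
    exact Prod.ext (hfst σ p.1 p.2).symm rfl
  · -- right inverse : i (j x) = x
    rintro ⟨⟨m, hm⟩, τ⟩ _
    have hPm' : P m := (Finset.mem_filter.mp hm).2
    set σ : Equiv.Perm (Fin nB × Fin nC) :=
      (Equiv.ofBijective (fun p : Fin nB × Fin nC => e m p.1 p.2)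
        (hbij m (Finset.mem_filter.mp hm).2)).symm.trans (Equiv.prodCongrRight τ) with hσ
    have factA : ∀ b c, σ (e m b c) = (b, τ b c) := by
      intro b c
      rw [hσ, Equiv.trans_apply, symm_ofBij _ _ (b, c)]
      rfl
    have hm1 : (fun α => (σ α).1) = m := by
      funext α
      obtain ⟨p, rfl⟩ := (hbij m hPm').surjective α
      rw [factA p.1 p.2]
      exact (hfib m hPm' p.1 p.2).symm
    refine Prod.ext (Subtype.ext hm1) ?_
    funext b
    apply Equiv.ext
    intro c
    show (σ (e (fun α => (σ α).1) b c)).2 = τ b c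
    rw [hm1, factA b c]
  · -- values agree
    intro σ _
    have hleft : (Equiv.ofBijective (fun p : Fin nB × Fin nC => e (fun α => (σ α).1) p.1 p.2)
        (hbij _ (Finset.mem_filter.mp (hmem σ)).2)).symm.trans
        (Equiv.prodCongrRight fun b => Equiv.ofBijective _ (hbij2 σ b)) = σ := by
      apply Equiv.ext
      intro α
      obtain ⟨p, rfl⟩ := (hbij _ (hPm σ)).surjective α
      rw [Equiv.trans_apply, symm_ofBij _ _ p]
      show (p.1, (σ (e (fun α => (σ α).1) p.1 p.2)).2) = σ (e (fun α => (σ α).1) p.1 p.2)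
      exact Prod.ext (hfst σ p.1 p.2).symm rfl
    have hsign : Equiv.Perm.sign σ =
        Equiv.Perm.sign (Equiv.ofBijective (fun p : Fin nB × Fin nC => e (fun α => (σ α).1) p.1 p.2)
          (hbij _ (Finset.mem_filter.mp (hmem σ)).2)) *
        ∏ b, Equiv.Perm.sign (Equiv.ofBijective _ (hbij2 σ b)) := by
      conv_lhs => rw [← hleft]
      rw [Equiv.Perm.sign_trans, Equiv.Perm.sign_symm, Equiv.Perm.sign_prodCongrRight, mul_comm]
    simp only [hK]
    rw [Finset.prod_mul_distrib]
    rw [← Equiv.prod_comp (Equiv.ofBijective (fun p : Fin nB × Fin nC => e (fun α => (σ α).1) p.1 p.2)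
      (hbij _ (Finset.mem_filter.mp (hmem σ)).2)) (fun α => T (meas (σ α).2) (tg α))]
    simp only [Equiv.ofBijective_apply]
    rw [Fintype.prod_prod_type]
    rw [hsign]
    push_cast
    rw [Finset.prod_mul_distrib]
    rw [Fintype.prod_prod_type]
    ring
end

section
/- Conversely, if exactly one bijection σ₀ : E^Δ → 𝓑×𝓒 has a generically nonzero term Π_α T'_{s(α),σ₀_B(α)} T_{σ₀_C(α),t(α)} and all other bijections have identically zero terms, then det K̂ is generically nonzero, and hence the network is generically decoupled-identifiable. -/
open Matrix

/-- If exactly one bijection `σ₀ : E^Δ → 𝓑×𝓒` has a generically nonzero Leibniz term and all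
other bijections have identically zero terms, then `det K̂` is generically nonzero, and hence
the network is generically decoupled-identifiable. -/
theorem stmt14 (n nB nC d : ℕ)
    (Gf G'f Tm T'm : (Fin d → ℂ) → Matrix (Fin n) (Fin n) ℂ)
    (hT : ∀ x, Tm x = (1 - Gf x)⁻¹) (hT' : ∀ x, T'm x = (1 - G'f x)⁻¹)
    (s tg : Fin nB × Fin nC → Fin n) (exc : Fin nB → Fin n) (meas : Fin nC → Fin n)
    (hinj : Function.Injective fun α : Fin nB × Fin nC => (tg α, s α))
    (B : Matrix (Fin n) (Fin nB) ℂ)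
    (hB : ∀ i b, B i b = if i = exc b then 1 else 0)
    (C : Matrix (Fin nC) (Fin n) ℂ)
    (hC : ∀ c i, C c i = if i = meas c then 1 else 0)
    (Khat : (Fin d → ℂ) → (Fin d → ℂ) → Matrix (Fin nB × Fin nC) (Fin nB × Fin nC) ℂ)
    (hK : ∀ x x' p α, Khat x x' p α = T'm x' (s α) (exc p.1) * Tm x (meas p.2) (tg α))
    (σ₀ : Equiv.Perm (Fin nB × Fin nC))
    (h0 : ∃ x x' : Fin d → ℂ,
      (∏ α : Fin nB × Fin nC,
        T'm x' (s α) (exc (σ₀ α).1) * Tm x (meas (σ₀ α).2) (tg α)) ≠ 0)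
    (hz : ∀ σ : Equiv.Perm (Fin nB × Fin nC), σ ≠ σ₀ → ∀ x x' : Fin d → ℂ,
      (∏ α : Fin nB × Fin nC,
        T'm x' (s α) (exc (σ α).1) * Tm x (meas (σ α).2) (tg α)) = 0) :
    (∃ x x' : Fin d → ℂ, (Khat x x').det ≠ 0) ∧
      ∀ x x' : Fin d → ℂ, (Khat x x').det ≠ 0 →
        ∀ Δ : Matrix (Fin n) (Fin n) ℂ,
          (∀ i j, (∀ α : Fin nB × Fin nC, (tg α, s α) ≠ (i, j)) → Δ i j = 0) →
          C * Tm x * Δ * T'm x' * B = 0 → Δ = 0 := by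
  constructor
  · obtain ⟨x, x', hx⟩ := h0
    refine ⟨x, x', ?_⟩
    have hdet : (Khat x x').det =
        (Equiv.Perm.sign σ₀ : ℤ) •
          ∏ α : Fin nB × Fin nC,
            T'm x' (s α) (exc (σ₀ α).1) * Tm x (meas (σ₀ α).2) (tg α) := by
      rw [Matrix.det_apply]
      rw [Finset.sum_eq_single σ₀]
      · congr 1
        refine Finset.prod_congr rfl fun α _ => ?_
        rw [hK]
      · intro σ _ hσ
        have := hz σ hσ x x'
        have hp : (∏ α : Fin nB × Fin nC, Khat x x' (σ α) α) = 0 := by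
          rw [← this]
          exact Finset.prod_congr rfl fun α _ => (hK x x' (σ α) α)
        rw [hp, smul_zero]
      · intro h; exact absurd (Finset.mem_univ σ₀) h
    rw [hdet]
    rcases Int.units_eq_one_or (Equiv.Perm.sign σ₀) with h | h <;>
      simp [h, hx]
  · intro x x' hdet Δ hsupp hzero
    set K := Khat x x' with hKdef
    set v : Fin nB × Fin nC → ℂ := fun α => Δ (tg α) (s α) with hv
    have hmv : K.mulVec v = 0 := by
      funext p
      have h1 : (C * Tm x * Δ * T'm x' * B) p.2 p.1 = 0 := by rw [hzero]; rfl
      have h2 : (C * Tm x * Δ * T'm x' * B) p.2 p.1 =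
          ∑ i, ∑ j, Tm x (meas p.2) i * Δ i j * T'm x' j (exc p.1) := by
        simp only [Matrix.mul_apply, hB, hC]
        simp [Finset.sum_mul, Finset.mul_sum]
        exact Finset.sum_comm
      have h3 : ∑ i, ∑ j, Tm x (meas p.2) i * Δ i j * T'm x' j (exc p.1) =
          ∑ α : Fin nB × Fin nC,
            Tm x (meas p.2) (tg α) * Δ (tg α) (s α) * T'm x' (s α) (exc p.1) := by
        rw [← Finset.sum_product']
        rw [show (Finset.univ ×ˢ Finset.univ : Finset (Fin n × Fin n)) = Finset.univ from rfl]
        have himg := Finset.sum_image (s := (Finset.univ : Finset (Fin nB × Fin nC)))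
          (f := fun q : Fin n × Fin n =>
            Tm x (meas p.2) q.1 * Δ q.1 q.2 * T'm x' q.2 (exc p.1))
          (g := fun α : Fin nB × Fin nC => (tg α, s α))
          (fun a _ b _ h => hinj h)
        rw [← himg]
        symm
        apply Finset.sum_subset (Finset.subset_univ _)
        intro q _ hq
        have : Δ q.1 q.2 = 0 := by
          apply hsupp
          intro α hα
          exact hq (Finset.mem_image.2 ⟨α, Finset.mem_univ _, by simpa using hα⟩)
        rw [this, mul_zero, zero_mul]
      have : K.mulVec v p =
          ∑ α : Fin nB × Fin nC,
            Tm x (meas p.2) (tg α) * Δ (tg α) (s α) * T'm x' (s α) (exc p.1) := by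
        simp only [Matrix.mulVec, dotProduct, hKdef, hK, hv]
        refine Finset.sum_congr rfl fun α _ => by ring
      rw [Pi.zero_apply, this, ← h3, ← h2, h1]
    have hv0 : v = 0 := by
      have hK1 : K⁻¹ * K = 1 := Matrix.nonsing_inv_mul K (isUnit_iff_ne_zero.2 hdet)
      calc v = (K⁻¹ * K).mulVec v := by rw [hK1, Matrix.one_mulVec]
        _ = K⁻¹.mulVec (K.mulVec v) := by rw [Matrix.mulVec_mulVec]
        _ = 0 := by rw [hmv, Matrix.mulVec_zero]
    ext i j
    by_cases h : ∃ α : Fin nB × Fin nC, (tg α, s α) = (i, j)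
    · obtain ⟨α, hα⟩ := h
      have := congrFun hv0 α
      simp only [hv, Pi.zero_apply] at this
      obtain ⟨h1, h2⟩ := Prod.mk.injEq _ _ _ _ ▸ hα
      simp only [Matrix.zero_apply]
      rw [← h1, ← h2]; exact this
    · simp only [Matrix.zero_apply]
      exact hsupp i j (fun α hα => h ⟨α, hα⟩)
end

section
/- If det K̂ is generically nonzero, then there exists an excitation assignment σ_B : E^Δ → 𝓑 with all fibers of size n_C such that: (i) for every α ∈ E^Δ, T'_{s(α),σ_B(α)} is not identically zero, and (ii) for every b ∈ 𝓑, det T_{𝓒, t(σ_B^{-1}(b))} is not identically zero (equivalently, the submatrix of T with rows 𝓒 and columns the targets of the edges assigned to b has generic rank n_C). -/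
open Matrix

section Aux

variable {nB nC : ℕ}

/-- Auxiliary: if some permutation of `Fin nB × Fin nC` has first components prescribed by `g`,
then every fiber of `g` has cardinality `nC`. -/
lemma stmt17_aux_card (g : Fin nB × Fin nC → Fin nB) (σ₀ : Equiv.Perm (Fin nB × Fin nC))
    (hσ₀ : ∀ α, (σ₀ α).1 = g α) (b : Fin nB) :
    (Finset.univ.filter fun α => g α = b).card = nC := by
  classical
  have h1 : (Finset.univ.filter fun α => g α = b).card
      = (Finset.univ.filter fun p : Fin nB × Fin nC => p.1 = b).card := by
    refine Finset.card_bij (fun α _ => σ₀ α) ?_ ?_ ?_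
    · intro α hα
      simp only [Finset.mem_filter, Finset.mem_univ, true_and] at hα ⊢
      rw [hσ₀]; exact hα
    · intro α _ α' _ h
      exact σ₀.injective h
    · intro p hp
      simp only [Finset.mem_filter, Finset.mem_univ, true_and] at hp
      refine ⟨σ₀.symm p, ?_, by simp⟩
      simp only [Finset.mem_filter, Finset.mem_univ, true_and]
      rw [← hσ₀ (σ₀.symm p)]
      simpa using hp
  rw [h1]
  have h2 : (Finset.univ.filter fun p : Fin nB × Fin nC => p.1 = b)
      = {b} ×ˢ Finset.univ := by
    ext ⟨b', c⟩
    simp [Finset.mem_product, eq_comm]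
  rw [h2]
  simp

end Aux

/-- If `det K̂` is generically nonzero then there exists an excitation assignment
`σ_B = m : E^Δ → 𝓑` with all fibers of size `n_C` such that (i) each `T'_{s(α),σ_B(α)}` is not
identically zero and (ii) for every excitation `b`, `det T_{𝓒, t(σ_B⁻¹(b))} ≠ 0` (generic rank
`n_C`), the fiber of `b` being enumerated by `e b : 𝓒 → E^Δ`. -/
theorem stmt17 (n nB nC d : ℕ)
    (Gf G'f Tm T'm : (Fin d → ℂ) → Matrix (Fin n) (Fin n) ℂ)
    (hT : ∀ x, Tm x = (1 - Gf x)⁻¹) (hT' : ∀ x, T'm x = (1 - G'f x)⁻¹)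
    (s tg : Fin nB × Fin nC → Fin n) (exc : Fin nB → Fin n) (meas : Fin nC → Fin n)
    (Khat : (Fin d → ℂ) → (Fin d → ℂ) → Matrix (Fin nB × Fin nC) (Fin nB × Fin nC) ℂ)
    (hK : ∀ x x' p α, Khat x x' p α = T'm x' (s α) (exc p.1) * Tm x (meas p.2) (tg α))
    (hgen : ∃ x x' : Fin d → ℂ, (Khat x x').det ≠ 0) :
    ∃ m : (Fin nB × Fin nC) → Fin nB,
      (∀ b : Fin nB, (Finset.univ.filter fun α => m α = b).card = nC) ∧
      ∃ (e : Fin nB → Fin nC → Fin nB × Fin nC) (x x' : Fin d → ℂ),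
        (∀ b : Fin nB, Function.Injective (e b) ∧ ∀ c, m (e b c) = b) ∧
        (∀ α : Fin nB × Fin nC, T'm x' (s α) (exc (m α)) ≠ 0) ∧
        ∀ b : Fin nB,
          (Matrix.of fun c c' : Fin nC => Tm x (meas c) (tg (e b c'))).det ≠ 0 := by
  classical
  obtain ⟨x, x', hdet⟩ := hgen
  set A : Fin nB × Fin nC → Fin nB → ℂ := fun α b => T'm x' (s α) (exc b) with hA
  set B : Fin nC → Fin nB × Fin nC → ℂ := fun c α => Tm x (meas c) (tg α) with hBdef
  -- expand the determinant as a sum over permutations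
  have h1 : (∑ σ : Equiv.Perm (Fin nB × Fin nC),
      Equiv.Perm.sign σ • ∏ α : Fin nB × Fin nC, (A α (σ α).1 * B (σ α).2 α)) ≠ 0 := by
    have hKeq : Khat x x' = Matrix.of fun p α => A α p.1 * B p.2 α := by
      ext p α
      simp [hK, hA, hBdef]
    rw [hKeq, Matrix.det_apply] at hdet
    exact hdet
  -- group permutations by the induced assignment g
  have h2 : ∃ g : Fin nB × Fin nC → Fin nB,
      (∑ σ ∈ Finset.univ.filter
        (fun σ : Equiv.Perm (Fin nB × Fin nC) => (fun α => (σ α).1) = g),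
        Equiv.Perm.sign σ • ∏ α : Fin nB × Fin nC, (A α (σ α).1 * B (σ α).2 α)) ≠ 0 := by
    by_contra hcon
    push_neg at hcon
    apply h1
    rw [← Finset.sum_fiberwise Finset.univ
      (fun σ : Equiv.Perm (Fin nB × Fin nC) => fun α => (σ α).1)
      (fun σ => Equiv.Perm.sign σ • ∏ α : Fin nB × Fin nC, (A α (σ α).1 * B (σ α).2 α))]
    exact Finset.sum_eq_zero fun g _ => hcon g
  obtain ⟨g, hg⟩ := h2
  set cls : Finset (Equiv.Perm (Fin nB × Fin nC)) :=
    Finset.univ.filter (fun σ : Equiv.Perm (Fin nB × Fin nC) => (fun α => (σ α).1) = g)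
    with hcls
  -- the class is nonempty
  have hne : cls.Nonempty := by
    by_contra hemp
    rw [Finset.not_nonempty_iff_eq_empty] at hemp
    rw [hemp] at hg
    simp at hg
  obtain ⟨σ₀, hσ₀mem⟩ := hne
  have hσ₀ : ∀ α, (σ₀ α).1 = g α := by
    intro α
    exact congrFun (Finset.mem_filter.1 hσ₀mem).2 α
  -- fibers of g have cardinality nC
  have hcard : ∀ b, (Finset.univ.filter fun α => g α = b).card = nC :=
    stmt17_aux_card g σ₀ hσ₀
  -- enumerate the fibers
  set e : Fin nB → Fin nC → Fin nB × Fin nC := fun b c =>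
    (((Finset.univ.filter fun α => g α = b).equivFinOfCardEq (hcard b)).symm c :
      Fin nB × Fin nC) with he
  have hge : ∀ b c, g (e b c) = b := by
    intro b c
    have hmem := (((Finset.univ.filter fun α => g α = b).equivFinOfCardEq
      (hcard b)).symm c).2
    rw [Finset.mem_filter] at hmem
    exact hmem.2
  have heinj : ∀ b, Function.Injective (e b) := by
    intro b c c' h
    have h' := Subtype.coe_injective (a₁ :=
      ((Finset.univ.filter fun α => g α = b).equivFinOfCardEq (hcard b)).symm c)
      (a₂ := ((Finset.univ.filter fun α => g α = b).equivFinOfCardEq (hcard b)).symm c') h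
    exact (((Finset.univ.filter fun α => g α = b).equivFinOfCardEq
      (hcard b)).symm).injective h'
  -- the combined map τ : (b, c) ↦ e b c is a bijection
  have hτinj : Function.Injective (fun q : Fin nB × Fin nC => e q.1 q.2) := by
    intro q q' h
    simp only at h
    have hb : q.1 = q'.1 := by
      rw [← hge q.1 q.2, ← hge q'.1 q'.2, h]
    obtain ⟨b, c⟩ := q
    obtain ⟨b', c'⟩ := q'
    simp only at hb h
    subst hb
    exact Prod.ext rfl (heinj b h)
  set τ : Equiv.Perm (Fin nB × Fin nC) :=
    Equiv.ofBijective _ ((Finite.injective_iff_bijective).1 hτinj) with hτ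
  have hτapp : ∀ q : Fin nB × Fin nC, τ q = e q.1 q.2 := fun q => rfl
  -- factor the class sum
  set C : ℂ := ∏ α : Fin nB × Fin nC, A α (g α) with hC
  set D : ℂ := ∑ σ ∈ cls, Equiv.Perm.sign σ • ∏ α : Fin nB × Fin nC, B (σ α).2 α with hD
  have hfactor : (∑ σ ∈ cls,
      Equiv.Perm.sign σ • ∏ α : Fin nB × Fin nC, (A α (σ α).1 * B (σ α).2 α)) = C * D := by
    rw [hD, Finset.mul_sum]
    refine Finset.sum_congr rfl ?_
    intro σ hσ
    have hσg : ∀ α, (σ α).1 = g α := fun α => congrFun (Finset.mem_filter.1 hσ).2 α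
    rw [mul_smul_comm]
    congr 1
    rw [hC, ← Finset.prod_mul_distrib]
    refine Finset.prod_congr rfl ?_
    intro α _
    rw [hσg α]
  rw [hfactor] at hg
  have hCne : C ≠ 0 := fun h => hg (by rw [h, zero_mul])
  have hDne : D ≠ 0 := fun h => hg (by rw [h, mul_zero])
  -- D equals the determinant of the auxiliary matrix N
  set N : Matrix (Fin nB × Fin nC) (Fin nB × Fin nC) ℂ :=
    Matrix.of fun p α => if p.1 = g α then B p.2 α else 0 with hN
  have hdetN : N.det = D := by
    rw [Matrix.det_apply, hD,
      ← Finset.sum_filter_add_sum_filter_not Finset.univ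
        (fun σ : Equiv.Perm (Fin nB × Fin nC) => (fun α => (σ α).1) = g)]
    have hzero : (∑ σ ∈ Finset.univ.filter
        (fun σ : Equiv.Perm (Fin nB × Fin nC) => ¬ (fun α => (σ α).1) = g),
        Equiv.Perm.sign σ • ∏ α : Fin nB × Fin nC, N (σ α) α) = 0 := by
      refine Finset.sum_eq_zero ?_
      intro σ hσ
      have hσg := (Finset.mem_filter.1 hσ).2
      rw [funext_iff] at hσg
      push_neg at hσg
      obtain ⟨α, hα⟩ := hσg
      have hpz : (∏ β : Fin nB × Fin nC, N (σ β) β) = 0 := by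
        refine Finset.prod_eq_zero (Finset.mem_univ α) ?_
        simp only [hN, Matrix.of_apply]
        rw [if_neg hα]
      rw [hpz, smul_zero]
    rw [hzero, add_zero]
    refine Finset.sum_congr rfl ?_
    intro σ hσ
    have hσg : ∀ α, (σ α).1 = g α := fun α => congrFun (Finset.mem_filter.1 hσ).2 α
    congr 1
    refine Finset.prod_congr rfl ?_
    intro α _
    simp only [hN, Matrix.of_apply]
    rw [if_pos (hσg α)]
  have hdetNne : N.det ≠ 0 := by rw [hdetN]; exact hDne
  -- the target block matrices
  set M : Fin nB → Matrix (Fin nC) (Fin nC) ℂ :=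
    fun b => Matrix.of fun c c' : Fin nC => Tm x (meas c) (tg (e b c')) with hM
  -- reindexing N gives a block diagonal matrix
  set e₁ : Fin nC × Fin nB ≃ Fin nB × Fin nC := Equiv.prodComm (Fin nC) (Fin nB) with he₁
  set e₂ : Fin nC × Fin nB ≃ Fin nB × Fin nC :=
    (Equiv.prodComm (Fin nC) (Fin nB)).trans τ with he₂
  have hblock : N.submatrix e₁ e₂ = Matrix.blockDiagonal M := by
    ext ⟨c, b⟩ ⟨c', b'⟩
    show (if b = g (e b' c') then B c (e b' c') else 0)
      = Matrix.blockDiagonal M (c, b) (c', b')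
    rw [Matrix.blockDiagonal_apply, hge b' c']
    by_cases hb : b = b'
    · subst hb
      rw [if_pos rfl, if_pos rfl]
      rfl
    · rw [if_neg hb, if_neg hb]
  -- determinant of the reindexed matrix is nonzero
  have hsub : N.submatrix e₁ e₂ = (N.submatrix e₂ e₂).submatrix (e₁.trans e₂.symm :
      Fin nC × Fin nB ≃ Fin nC × Fin nB) id := by
    ext i j
    simp [Matrix.submatrix_apply]
  have hdetblock : (Matrix.blockDiagonal M).det ≠ 0 := by
    rw [← hblock, hsub]
    have hperm := Matrix.det_permute ((e₁.trans e₂.symm :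
      Fin nC × Fin nB ≃ Fin nC × Fin nB) : Equiv.Perm (Fin nC × Fin nB)) (N.submatrix e₂ e₂)
    rw [hperm, Matrix.det_submatrix_equiv_self]
    refine mul_ne_zero ?_ hdetNne
    rcases Int.units_eq_one_or (Equiv.Perm.sign ((e₁.trans e₂.symm :
      Fin nC × Fin nB ≃ Fin nC × Fin nB) : Equiv.Perm (Fin nC × Fin nB))) with h1 | h1 <;>
      rw [h1] <;> norm_num
  rw [Matrix.det_blockDiagonal] at hdetblock
  -- assemble the conclusion
  refine ⟨g, hcard, e, x, x', fun b => ⟨heinj b, fun c => hge b c⟩, ?_, ?_⟩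
  · intro α
    have hfac := Finset.prod_ne_zero_iff.1 hCne α (Finset.mem_univ α)
    simpa [hA] using hfac
  · intro b
    exact Finset.prod_ne_zero_iff.1 hdetblock b (Finset.mem_univ b)
end
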